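/- Let c11, c22 be positive real numbers, c12 a real number, and Δx, Δy positive real numbers. Let V be the 9-dimensional real vector space of polynomials u(x,y) of degree at most 2 in x and at most 2 in y, and let Q be the differential operator Qu = c11 ∂_x^2 u + 2 c12 ∂_x ∂_y u + c22 ∂_y^2 u. Consider the nine linear functionals on V: ℓ1(u) = u(Δx, Δy); ℓ2(u) = u(0,0); ℓ3(u) = ∂_y u(0,0); ℓ4(u) = ∂_x u(0,0); ℓ5(u) = ∂_y^2 u(0,0); ℓ6(u) = ∂_x^2 u(0,0); ℓ7(u) = ∂_y (Qu)(0,0); ℓ8(u) = ∂_x (Qu)(0,0); ℓ9(u) = Δy^2 ∂_y^2 (Qu)(0,0) + Δx^2 ∂_x^2 (Qu)(0,0). Then ℓ1, …, ℓ9 are linearly independent if and only if c11 c22 ≠ 4 c12^2. -/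
import Mathlib


open MvPolynomial

/-- The constant-coefficient operator `Q u = c11 ∂ₓ²u + 2 c12 ∂ₓ∂ᵧ u + c22 ∂ᵧ²u`,
with `x` the variable `0` and `y` the variable `1`. -/
noncomputable def lcbcQ (c11 c12 c22 : ℝ) (u : MvPolynomial (Fin 2) ℝ) :
    MvPolynomial (Fin 2) ℝ :=
  c11 • pderiv 0 (pderiv 0 u) + (2 * c12) • pderiv 0 (pderiv 1 u) +
    c22 • pderiv 1 (pderiv 1 u)

lemma lcbc_pderiv_two (i : Fin 2) : pderiv i (2 : MvPolynomial (Fin 2) ℝ) = 0 := by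
  have h2 : (2 : MvPolynomial (Fin 2) ℝ) = C 2 := by simp [map_ofNat]
  rw [h2, pderiv_C]

lemma lcbcQ_add (c11 c12 c22 : ℝ) (u v : MvPolynomial (Fin 2) ℝ) :
    lcbcQ c11 c12 c22 (u + v) = lcbcQ c11 c12 c22 u + lcbcQ c11 c12 c22 v := by
  simp only [lcbcQ, map_add, smul_add]; abel

lemma lcbcQ_zero (c11 c12 c22 : ℝ) : lcbcQ c11 c12 c22 0 = 0 := by
  simp [lcbcQ]

/-- On the singular surface `c11 c22 = 4 c12²`, the combination
`2 c12 ℓ7 - c11 ℓ8` vanishes on the monomials of `V`. -/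
lemma lcbc_key_monomial (c11 c12 c22 : ℝ) (h : c11 * c22 = 4 * c12 ^ 2)
    (c : ℝ) (i j : ℕ) (hi : i ≤ 2) (hj : j ≤ 2) :
    2 * c12 * eval ![(0:ℝ),0] (pderiv 1 (lcbcQ c11 c12 c22 (C c * X 0 ^ i * X 1 ^ j)))
      - c11 * eval ![(0:ℝ),0] (pderiv 0 (lcbcQ c11 c12 c22 (C c * X 0 ^ i * X 1 ^ j))) = 0 := by
  interval_cases i <;> interval_cases j <;>
    simp [lcbcQ, pderiv_mul, pderiv_X, pderiv_pow, lcbc_pderiv_two] <;>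
    first
      | ring1
      | linear_combination (2*c) * h
      | linear_combination (-2*c) * h

lemma lcbc_monomial_eq (v : Fin 2 →₀ ℕ) (c : ℝ) :
    (monomial v c : MvPolynomial (Fin 2) ℝ) = C c * X 0 ^ (v 0) * X 1 ^ (v 1) := by
  have hv : v = Finsupp.single 0 (v 0) + Finsupp.single 1 (v 1) := by
    ext k; fin_cases k <;> simp [Finsupp.single_apply]
  rw [hv]; simp [X_pow_eq_monomial, C_mul_monomial, monomial_mul]

/-- On the singular surface, `2 c12 ℓ7 - c11 ℓ8` vanishes on all of `V`. -/
lemma lcbc_key (c11 c12 c22 : ℝ) (h : c11 * c22 = 4 * c12 ^ 2)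
    (u : MvPolynomial (Fin 2) ℝ) (h0 : degreeOf 0 u ≤ 2) (h1 : degreeOf 1 u ≤ 2) :
    2 * c12 * eval ![(0:ℝ),0] (pderiv 1 (lcbcQ c11 c12 c22 u))
      - c11 * eval ![(0:ℝ),0] (pderiv 0 (lcbcQ c11 c12 c22 u)) = 0 := by
  set F : MvPolynomial (Fin 2) ℝ → ℝ := fun p =>
    2 * c12 * eval ![(0:ℝ),0] (pderiv 1 (lcbcQ c11 c12 c22 p))
      - c11 * eval ![(0:ℝ),0] (pderiv 0 (lcbcQ c11 c12 c22 p)) with hFdef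
  show F u = 0
  have hsupp : ∀ m ∈ u.support, m 0 ≤ 2 ∧ m 1 ≤ 2 := by
    intro m hm
    exact ⟨(degreeOf_le_iff.mp h0) m hm, (degreeOf_le_iff.mp h1) m hm⟩
  rw [← support_sum_monomial_coeff u]
  have : ∀ s : Finset (Fin 2 →₀ ℕ), (∀ m ∈ s, m 0 ≤ 2 ∧ m 1 ≤ 2) →
      F (∑ v ∈ s, monomial v (coeff v u)) = 0 := by
    intro s
    induction s using Finset.induction_on with
    | empty => intro _; simp [hFdef, lcbcQ_zero]
    | @insert a s hx ih =>
      intro hmem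
      rw [Finset.sum_insert hx]
      have hadd : ∀ p q, F (p + q) = F p + F q := by
        intro p q; simp [hFdef, lcbcQ_add, map_add]; ring
      rw [hadd, ih (fun m hm => hmem m (Finset.mem_insert_of_mem hm))]
      have hb := hmem _ (Finset.mem_insert_self _ _)
      rw [lcbc_monomial_eq]
      have hkm := lcbc_key_monomial c11 c12 c22 h (coeff a u) (a 0) (a 1) hb.1 hb.2
      simp only [hFdef]
      linarith [hkm]
  exact this u.support hsupp

lemma lcbc_deg_le (a b : ℕ) (ha : a ≤ 2) (hb : b ≤ 2) (i : Fin 2) :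
    degreeOf i ((X 0 : MvPolynomial (Fin 2) ℝ) ^ a * X 1 ^ b) ≤ 2 := by
  calc degreeOf i ((X 0 : MvPolynomial (Fin 2) ℝ) ^ a * X 1 ^ b)
      ≤ degreeOf i ((X 0 : MvPolynomial (Fin 2) ℝ) ^ a)
        + degreeOf i ((X 1 : MvPolynomial (Fin 2) ℝ) ^ b) := degreeOf_mul_le _ _ _
    _ ≤ a * degreeOf i (X 0 : MvPolynomial (Fin 2) ℝ)
        + b * degreeOf i (X 1 : MvPolynomial (Fin 2) ℝ) := by
        gcongr <;> exact degreeOf_pow_le _ _ _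
    _ ≤ 2 := by fin_cases i <;> simp [degreeOf_X] <;> omega

/-- The nine LCBC corner constraint functionals for `p = 1` at a
Dirichlet–Dirichlet corner, acting on the space `V` of polynomials of degree at
most `2` in each of `x` and `y`, are linearly independent iff `c11 c22 ≠ 4 c12²`. -/
theorem lcbc_corner_functionals_linear_independent
    (c11 c22 c12 Δx Δy : ℝ) (h11 : 0 < c11) (h22 : 0 < c22)
    (hΔx : 0 < Δx) (hΔy : 0 < Δy) :
    (∀ a : Fin 9 → ℝ,
      (∀ u : MvPolynomial (Fin 2) ℝ, degreeOf 0 u ≤ 2 → degreeOf 1 u ≤ 2 →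
          a 0 * eval ![Δx, Δy] u
        + a 1 * eval ![0, 0] u
        + a 2 * eval ![0, 0] (pderiv 1 u)
        + a 3 * eval ![0, 0] (pderiv 0 u)
        + a 4 * eval ![0, 0] (pderiv 1 (pderiv 1 u))
        + a 5 * eval ![0, 0] (pderiv 0 (pderiv 0 u))
        + a 6 * eval ![0, 0] (pderiv 1 (lcbcQ c11 c12 c22 u))
        + a 7 * eval ![0, 0] (pderiv 0 (lcbcQ c11 c12 c22 u))
        + a 8 * (Δy ^ 2 * eval ![0, 0] (pderiv 1 (pderiv 1 (lcbcQ c11 c12 c22 u)))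
               + Δx ^ 2 * eval ![0, 0] (pderiv 0 (pderiv 0 (lcbcQ c11 c12 c22 u)))) = 0)
        → ∀ i, a i = 0)
    ↔ c11 * c22 ≠ 4 * c12 ^ 2 := by
  constructor
  · intro hind hc
    set v : Fin 9 → ℝ := ![0,0,0,0,0,0,2*c12,-c11,0] with hv
    have hv0 : v 0 = 0 := rfl
    have hv1 : v 1 = 0 := rfl
    have hv2 : v 2 = 0 := rfl
    have hv3 : v 3 = 0 := rfl
    have hv4 : v 4 = 0 := rfl
    have hv5 : v 5 = 0 := rfl
    have hv6 : v 6 = 2*c12 := rfl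
    have hv7 : v 7 = -c11 := rfl
    have hv8 : v 8 = 0 := rfl
    have h7 := hind v ?_ 7
    · rw [hv7] at h7
      linarith
    · intro u h0 h1
      have hk := lcbc_key c11 c12 c22 hc u h0 h1
      rw [hv0, hv1, hv2, hv3, hv4, hv5, hv6, hv7, hv8]
      linarith
  · intro hne a ha
    have E : ∀ i j : ℕ, i ≤ 2 → j ≤ 2 →
          a 0 * eval ![Δx, Δy] ((X 0 : MvPolynomial (Fin 2) ℝ) ^ i * X 1 ^ j)
        + a 1 * eval ![0, 0] ((X 0 : MvPolynomial (Fin 2) ℝ) ^ i * X 1 ^ j)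
        + a 2 * eval ![0, 0] (pderiv 1 ((X 0 : MvPolynomial (Fin 2) ℝ) ^ i * X 1 ^ j))
        + a 3 * eval ![0, 0] (pderiv 0 ((X 0 : MvPolynomial (Fin 2) ℝ) ^ i * X 1 ^ j))
        + a 4 * eval ![0, 0] (pderiv 1 (pderiv 1 ((X 0 : MvPolynomial (Fin 2) ℝ) ^ i * X 1 ^ j)))
        + a 5 * eval ![0, 0] (pderiv 0 (pderiv 0 ((X 0 : MvPolynomial (Fin 2) ℝ) ^ i * X 1 ^ j)))
        + a 6 * eval ![0, 0] (pderiv 1 (lcbcQ c11 c12 c22 ((X 0 : MvPolynomial (Fin 2) ℝ) ^ i * X 1 ^ j)))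
        + a 7 * eval ![0, 0] (pderiv 0 (lcbcQ c11 c12 c22 ((X 0 : MvPolynomial (Fin 2) ℝ) ^ i * X 1 ^ j)))
        + a 8 * (Δy ^ 2 * eval ![0, 0] (pderiv 1 (pderiv 1 (lcbcQ c11 c12 c22 ((X 0 : MvPolynomial (Fin 2) ℝ) ^ i * X 1 ^ j))))
               + Δx ^ 2 * eval ![0, 0] (pderiv 0 (pderiv 0 (lcbcQ c11 c12 c22 ((X 0 : MvPolynomial (Fin 2) ℝ) ^ i * X 1 ^ j))))) = 0 := by
      intro i j hi hj
      exact ha _ (lcbc_deg_le i j hi hj 0) (lcbc_deg_le i j hi hj 1)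
    have e00 := E 0 0 (by norm_num) (by norm_num)
    have e10 := E 1 0 (by norm_num) (by norm_num)
    have e01 := E 0 1 (by norm_num) (by norm_num)
    have e11 := E 1 1 (by norm_num) (by norm_num)
    have e20 := E 2 0 (by norm_num) (by norm_num)
    have e02 := E 0 2 (by norm_num) (by norm_num)
    have e21 := E 2 1 (by norm_num) (by norm_num)
    have e12 := E 1 2 (by norm_num) (by norm_num)
    have e22 := E 2 2 (by norm_num) (by norm_num)
    simp [lcbcQ, pderiv_mul, pderiv_X, pderiv_pow, lcbc_pderiv_two] at e00 e10 e01 e11 e20 e02 e21 e12 e22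
    have ha0 : a 0 = 0 := by
      rcases e11 with h | h | h
      · exact h
      · exact absurd h (ne_of_gt hΔx)
      · exact absurd h (ne_of_gt hΔy)
    rw [ha0] at e00 e10 e01 e20 e02 e21 e12 e22
    have ha1 : a 1 = 0 := by linarith
    have ha2 : a 2 = 0 := by linarith
    have ha3 : a 3 = 0 := by linarith
    have ha4 : a 4 = 0 := by linarith
    have ha5 : a 5 = 0 := by linarith
    have hfac : c11 * c22 - 4 * c12 ^ 2 ≠ 0 := sub_ne_zero_of_ne hne
    have h6 : (c11 * c22 - 4 * c12 ^ 2) * a 6 = 0 := by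
      linear_combination (c22 / 2) * e21 - c12 * e12
    have h7 : (c11 * c22 - 4 * c12 ^ 2) * a 7 = 0 := by
      linear_combination (c11 / 2) * e12 - c12 * e21
    have ha6 : a 6 = 0 := by
      rcases mul_eq_zero.mp h6 with h | h
      · exact absurd h hfac
      · exact h
    have ha7 : a 7 = 0 := by
      rcases mul_eq_zero.mp h7 with h | h
      · exact absurd h hfac
      · exact h
    have ha8 : a 8 = 0 := by
      have hK : Δy ^ 2 * (c11 * (2 * 2)) + Δx ^ 2 * (c22 * (2 * 2)) > 0 := by positivity
      have := e22
      nlinarith [this]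
    intro i
    fin_cases i <;> assumption
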